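/- arXiv:2307.11330 — 3 statements merged into one kernel-verified Lean document; each statement's English description precedes it below -/
import Mathlib

section
/- Let n and m be positive integers and let x_1, ..., x_n and y_1, ..., y_n be integers such that the multiset {x_1, ..., x_n} is not equal to the multiset {y_1, ..., y_n}, and such that \sum_{i=1}^{n} x_i^j = \sum_{i=1}^{n} y_i^j for every j = 1, 2, ..., m. Then n \geq m + 1. -/
/-!
If the power sums of `x` and `y` agree in degrees `1, …, m` and `n ≤ m`, Newton's identities
(dividing by `k` is harmless over the torsion-free ring `ℤ`) show that all elementary symmetric
functions `e₀, …, eₙ` of `x` and `y` agree. By Vieta these are the coefficients of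
`∏ (X - xᵢ)` and `∏ (X - yᵢ)`, so the two polynomials coincide and so do their multisets of
roots.
-/

open Finset

namespace MvPolynomial

theorem aeval_esymm_eq_of_aeval_psum_eq {σ R : Type*} [Fintype σ] [CommRing R]
    [IsAddTorsionFree R] (f g : σ → R) (m : ℕ)
    (h : ∀ j, 1 ≤ j → j ≤ m → aeval f (psum σ R j) = aeval g (psum σ R j)) :
    ∀ k ≤ m, aeval f (esymm σ R k) = aeval g (esymm σ R k) := by
  intro k
  induction k using Nat.strong_induction_on with
  | _ k ih =>
    intro hk
    rcases Nat.eq_zero_or_pos k with rfl | hk0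
    · simp
    have newton := mul_esymm_eq_sum σ R k
    have newton_f := congrArg (aeval f) newton
    have newton_g := congrArg (aeval g) newton
    simp only [map_mul, map_sum, map_pow, map_neg, map_one, map_natCast] at newton_f newton_g
    apply IsAddTorsionFree.nsmul_right_injective hk0.ne'
    simp only [nsmul_eq_mul, newton_f, newton_g]
    congr 1
    refine sum_congr rfl fun a ha => ?_
    obtain ⟨hak, ha1⟩ := mem_filter.mp ha
    rw [HasAntidiagonal.mem_antidiagonal] at hak
    rw [ih a.1 ha1 (by omega), h a.2 (by omega) (by omega)]

end MvPolynomial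

theorem Multiset.eq_of_card_eq_of_esymm_eq {R : Type*} [CommRing R] [IsDomain R]
    {s t : Multiset R} (hcard : card s = card t) (h : ∀ k ≤ card s, s.esymm k = t.esymm k) :
    s = t := by
  have hprod : (s.map fun a => Polynomial.X - Polynomial.C a).prod
      = (t.map fun a => Polynomial.X - Polynomial.C a).prod := by
    rw [prod_X_sub_X_eq_sum_esymm, prod_X_sub_X_eq_sum_esymm, ← hcard]
    exact Finset.sum_congr rfl fun k hk => by rw [h k (Nat.lt_succ_iff.mp (mem_range.mp hk))]
  simpa only [Polynomial.roots_multiset_prod_X_sub_C] using congrArg Polynomial.roots hprod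

open MvPolynomial in
theorem pte_size_ge_degree_add_one_general (n m : ℕ)
    (x y : Fin n → ℤ)
    (hne : (List.ofFn x : Multiset ℤ) ≠ (List.ofFn y : Multiset ℤ))
    (hsum : ∀ j : ℕ, 1 ≤ j → j ≤ m → ∑ i, x i ^ j = ∑ i, y i ^ j) :
    n ≥ m + 1 := by
  by_contra! hnm
  have hpsum : ∀ j, 1 ≤ j → j ≤ m →
      aeval x (psum (Fin n) ℤ j) = aeval y (psum (Fin n) ℤ j) := by
    simpa only [psum, map_sum, map_pow, aeval_X] using hsum
  have hesymm := aeval_esymm_eq_of_aeval_psum_eq x y m hpsum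
  simp only [aeval_esymm_eq_multiset_esymm, Fin.univ_val_map] at hesymm
  exact hne <| Multiset.eq_of_card_eq_of_esymm_eq (by simp) fun k hk =>
    hesymm k (by simp only [Multiset.coe_card, List.length_ofFn] at hk; omega)

/-- For a non-trivial solution of the PTE problem with size `n` and degree `m`
    to exist, one must have `n ≥ m + 1`. -/
theorem pte_size_ge_degree_add_one (n m : ℕ) (hn : 0 < n) (hm : 0 < m)
    (x y : Fin n → ℤ)
    (hne : (List.ofFn x : Multiset ℤ) ≠ (List.ofFn y : Multiset ℤ))
    (hsum : ∀ j : ℕ, 1 ≤ j → j ≤ m → ∑ i, x i ^ j = ∑ i, y i ^ j) :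
    n ≥ m + 1 :=
  pte_size_ge_degree_add_one_general n m x y hne hsum
end

section
/- Let n, k, s be positive integers with k \leq n, let f : \{1, ..., n\} \to \mathbb{Z} be nonincreasing (f(1) \geq f(2) \geq ... \geq f(n)), and let I and J be two distinct k-element subsets of \{1, ..., n\} with |I \cap J| = r. For a subset A of \{1, ..., n\} define g_A(t) = f(t) + 1 if t \in A and g_A(t) = f(t) otherwise. Suppose that \sum_{t=1}^{n} (g_I(t) + n - t)^p = \sum_{t=1}^{n} (g_J(t) + n - t)^p for every p = 1, 2, ..., s + 1. Write I \setminus J = \{i_1 < i_2 < ... < i_{k-r}\} and J \setminus I = \{j_1 < j_2 < ... < j_{k-r}\}, and set x_t = f(i_t) - i_t and y_t = f(j_t) - j_t for t = 1, ..., k - r. Then x_1 > x_2 > ... > x_{k-r} and y_1 > y_2 > ... > y_{k-r}, the multisets \{x_1, ..., x_{k-r}\} and \{y_1, ..., y_{k-r}\} are distinct, and \sum_{t=1}^{k-r} x_t^q = \sum_{t=1}^{k-r} y_t^q for every q = 1, 2, ..., s. In particular the PTE problem with size k - r and degree s has a non-trivial solution. -/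
/-!
Put `G t = f t - t` (with `t` the 1-based index), a strictly decreasing function. The `t`-th
summand of either power sum is `(G t + n + 1) ^ p` or `(G t + n) ^ p` according as `t` lies in
the index set, so all terms outside `I ∆ J` cancel, and the hypothesis says that
`(a + 1) ^ p - a ^ p`, for `a = G + n`, has equal sums over `I \ J` and `J \ I` for
`1 ≤ p ≤ s + 1`. Expanding binomially and inducting on the degree gives equal power sums of `a`,
hence of its translate `G`, up to degree `s`. The multisets `G (I \ J)` and `G (J \ I)` differ
because `G` is injective and two disjoint sets coincide only when both are empty, i.e. `I = J`.
-/

open Finset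

theorem add_one_pow_succ_sub_pow {R : Type*} [CommRing R] (z : R) (q : ℕ) :
    (z + 1) ^ (q + 1) - z ^ (q + 1) = ∑ j ∈ range (q + 1), ((q + 1).choose j : R) * z ^ j := by
  rw [add_pow, sum_range_succ]
  simp only [one_pow, mul_one, Nat.choose_self, Nat.cast_one, add_sub_cancel_right]
  exact sum_congr rfl fun j _ => mul_comm _ _

namespace Finset

variable {α R : Type*}

theorem sum_ite_mem_sub_sum_ite_mem [Fintype α] [DecidableEq α] [AddCommGroup R]
    (I J : Finset α) (u v : α → R) :
    ∑ t, (if t ∈ I then u t else v t) - ∑ t, (if t ∈ J then u t else v t) =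
      ∑ t ∈ I \ J, (u t - v t) - ∑ t ∈ J \ I, (u t - v t) := by
  have split : ∀ K : Finset α,
      ∑ t, (if t ∈ K then u t else v t) = ∑ t ∈ K, (u t - v t) + ∑ t, v t := by
    intro K
    rw [← Fintype.sum_ite_mem K, ← sum_add_distrib]
    exact sum_congr rfl fun t _ => by split_ifs <;> abel
  rw [split, split, add_sub_add_right_eq_sub, sum_sdiff_sub_sum_sdiff]

/-- By the binomial theorem the `p = q + 1` hypothesis is `q + 1` times the degree `q` conclusion
plus a combination of lower-degree ones. -/
theorem sum_pow_eq_of_sum_add_one_pow_sub_pow_eq [CommRing R] [IsDomain R] [CharZero R]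
    {A B : Finset α} {a : α → R} {m : ℕ}
    (h : ∀ p, 1 ≤ p → p ≤ m + 1 →
      ∑ t ∈ A, ((a t + 1) ^ p - a t ^ p) = ∑ t ∈ B, ((a t + 1) ^ p - a t ^ p))
    (q : ℕ) (hq : q ≤ m) : ∑ t ∈ A, a t ^ q = ∑ t ∈ B, a t ^ q := by
  induction q using Nat.strong_induction_on with
  | _ q ih =>
    have expand : ∀ C : Finset α, ∑ t ∈ C, ((a t + 1) ^ (q + 1) - a t ^ (q + 1)) =
        ∑ j ∈ range q, ((q + 1).choose j : R) * ∑ t ∈ C, a t ^ j +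
          (q + 1) * ∑ t ∈ C, a t ^ q := by
      intro C
      simp only [add_one_pow_succ_sub_pow, mul_sum]
      rw [sum_comm, sum_range_succ, Nat.choose_succ_self_right]
      push_cast
      rfl
    have lower : ∑ j ∈ range q, ((q + 1).choose j : R) * ∑ t ∈ A, a t ^ j =
        ∑ j ∈ range q, ((q + 1).choose j : R) * ∑ t ∈ B, a t ^ j :=
      sum_congr rfl fun j hj => by rw [ih j (mem_range.mp hj) (by grind)]
    have top := h (q + 1) (by omega) (by omega)
    rw [expand, expand, lower, add_right_inj] at top
    exact mul_left_cancel₀ (Nat.cast_add_one_ne_zero q) top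

theorem sum_add_pow_eq_of_sum_pow_eq [CommSemiring R] {A B : Finset α} {a : α → R} {m : ℕ}
    (h : ∀ q, q ≤ m → ∑ t ∈ A, a t ^ q = ∑ t ∈ B, a t ^ q) (c : R) (q : ℕ)
    (hq : q ≤ m) :
    ∑ t ∈ A, (a t + c) ^ q = ∑ t ∈ B, (a t + c) ^ q := by
  simp only [add_pow, sum_comm (s := A), sum_comm (s := B), ← sum_mul]
  exact sum_congr rfl fun j hj => by rw [h j (by grind)]

theorem coe_ofFn_comp_orderIsoOfFin [LinearOrder α] {β : Type*} (A : Finset α) {m : ℕ}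
    (hA : A.card = m) (G : α → β) :
    ((List.ofFn fun t => G (A.orderIsoOfFin hA t)) : Multiset β) = A.val.map G := by
  subst hA
  rw [List.ofFn_congr (length_sort (s := A) (· ≤ ·)).symm]
  simp only [coe_orderIsoOfFin_apply, orderEmbOfFin_apply, Fin.getElem_fin, Fin.val_cast]
  rw [List.ofFn_getElem_eq_map, ← Multiset.map_coe, sort_eq]

theorem sum_comp_orderIsoOfFin [LinearOrder α] [AddCommMonoid R] (A : Finset α) {m : ℕ}
    (hA : A.card = m) (G : α → R) :
    ∑ t, G (A.orderIsoOfFin hA t) = ∑ t ∈ A, G t := by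
  rw [← sum_coe_sort A G]
  exact Fintype.sum_equiv (A.orderIsoOfFin hA).toEquiv _ _ fun _ => rfl

end Finset

theorem sdiff_ne_sdiff_of_ne {α : Type*} [GeneralizedBooleanAlgebra α] {a b : α} (h : a ≠ b) :
    a \ b ≠ b \ a := by
  intro hab
  have hdisj : Disjoint (a \ b) (b \ a) := disjoint_sdiff_sdiff
  have hba : b \ a = ⊥ := disjoint_self.mp (hab ▸ hdisj)
  exact h (le_antisymm (sdiff_eq_bot_iff.mp (hab.trans hba)) (sdiff_eq_bot_iff.mp hba))

theorem Fin.strictAnti_sub_succ_val {n : ℕ} {f : Fin n → ℤ} (hf : Antitone f) :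
    StrictAnti fun t : Fin n => f t - ((t : ℕ) + 1) := by
  intro i j hij
  have hfij := hf hij.le
  have hval : (i : ℕ) < j := hij
  dsimp only
  omega

theorem pte_solution_of_central_characters_eq_general
    (n k s r : ℕ)
    (f : Fin n → ℤ) (hf : ∀ i j : Fin n, i ≤ j → f j ≤ f i)
    (I J : Finset (Fin n))
    (hIJ : I ≠ J)
    (hIJcard : (I \ J).card = k - r) (hJIcard : (J \ I).card = k - r)
    (hpow : ∀ p : ℕ, 1 ≤ p → p ≤ s + 1 →
      ∑ t : Fin n, ((if t ∈ I then f t + 1 else f t) + (n : ℤ) - ((t : ℕ) + 1)) ^ p =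
      ∑ t : Fin n, ((if t ∈ J then f t + 1 else f t) + (n : ℤ) - ((t : ℕ) + 1)) ^ p) :
    letI x : Fin (k - r) → ℤ := fun t =>
      f ((I \ J).orderIsoOfFin hIJcard t) - ((((I \ J).orderIsoOfFin hIJcard t : Fin n) : ℕ) + 1)
    letI y : Fin (k - r) → ℤ := fun t =>
      f ((J \ I).orderIsoOfFin hJIcard t) - ((((J \ I).orderIsoOfFin hJIcard t : Fin n) : ℕ) + 1)
    StrictAnti x ∧ StrictAnti y ∧
      (List.ofFn x : Multiset ℤ) ≠ (List.ofFn y : Multiset ℤ) ∧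
      ∀ q : ℕ, 1 ≤ q → q ≤ s → ∑ t, x t ^ q = ∑ t, y t ^ q := by
  set G : Fin n → ℤ := fun t => f t - ((t : ℕ) + 1)
  have hG : StrictAnti G := Fin.strictAnti_sub_succ_val fun i j h => hf i j h
  have hdiff : ∀ p, 1 ≤ p → p ≤ s + 1 →
      ∑ t ∈ I \ J, ((G t + n + 1) ^ p - (G t + n) ^ p) =
      ∑ t ∈ J \ I, ((G t + n + 1) ^ p - (G t + n) ^ p) := by
    intro p hp1 hp2
    have hterm : ∀ (K : Finset (Fin n)) (t : Fin n),
        ((if t ∈ K then f t + 1 else f t) + (n : ℤ) - ((t : ℕ) + 1)) ^ p =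
          if t ∈ K then (G t + n + 1) ^ p else (G t + n) ^ p := by
      intro K t
      split_ifs <;> ring
    rw [← sub_eq_zero, ← sum_ite_mem_sub_sum_ite_mem, sub_eq_zero]
    simpa only [hterm] using hpow p hp1 hp2
  have hpowsum (q : ℕ) (hq : q ≤ s) : ∑ t ∈ I \ J, G t ^ q = ∑ t ∈ J \ I, G t ^ q := by
    simpa only [add_neg_cancel_right] using
      sum_add_pow_eq_of_sum_pow_eq (sum_pow_eq_of_sum_add_one_pow_sub_pow_eq hdiff) (-n) q hq
  have hx : StrictMono fun t => ((I \ J).orderIsoOfFin hIJcard t : Fin n) :=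
    (Subtype.strictMono_coe _).comp (OrderIso.strictMono _)
  have hy : StrictMono fun t => ((J \ I).orderIsoOfFin hJIcard t : Fin n) :=
    (Subtype.strictMono_coe _).comp (OrderIso.strictMono _)
  refine ⟨hG.comp_strictMono hx, hG.comp_strictMono hy, ?_, fun q _ hq => ?_⟩
  · rw [coe_ofFn_comp_orderIsoOfFin _ hIJcard G, coe_ofFn_comp_orderIsoOfFin _ hJIcard G]
    exact fun h => sdiff_ne_sdiff_of_ne hIJ (val_injective (Multiset.map_injective hG.injective h))
  · rw [sum_comp_orderIsoOfFin _ hIJcard fun t => G t ^ q,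
      sum_comp_orderIsoOfFin _ hJIcard fun t => G t ^ q]
    exact hpowsum q hq

/-- Proposition 6.1 (combinatorial form).  Indices `1, …, n` are encoded by
`Fin n` (so the index `t` has value `t.1 + 1`), `f` is a nonincreasing Young
pattern, `I, J` are distinct `k`-element index sets with `|I ∩ J| = r`, and
`g_A(t) = f(t) + 1` if `t ∈ A`, `g_A(t) = f(t)` otherwise.  If the power sums
`∑_t (g_I(t) + n - t)^p` and `∑_t (g_J(t) + n - t)^p` agree for `p = 1, …, s+1`,
then the integers `x_t = f(i_t) - i_t` (over `I \ J = {i₁ < ⋯ < i_{k-r}}`) and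
`y_t = f(j_t) - j_t` (over `J \ I = {j₁ < ⋯ < j_{k-r}}`) are strictly
decreasing, distinct as multisets, and have equal `q`-th power sums for
`q = 1, …, s`: a non-trivial PTE solution of size `k - r` and degree `s`. -/
theorem pte_solution_of_central_characters_eq
    (n k s r : ℕ) (hn : 0 < n) (hk : 0 < k) (hs : 0 < s) (hkn : k ≤ n)
    (f : Fin n → ℤ) (hf : ∀ i j : Fin n, i ≤ j → f j ≤ f i)
    (I J : Finset (Fin n)) (hI : I.card = k) (hJ : J.card = k)
    (hIJ : I ≠ J) (hr : (I ∩ J).card = r)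
    (hIJcard : (I \ J).card = k - r) (hJIcard : (J \ I).card = k - r)
    (hpow : ∀ p : ℕ, 1 ≤ p → p ≤ s + 1 →
      ∑ t : Fin n, ((if t ∈ I then f t + 1 else f t) + (n : ℤ) - ((t : ℕ) + 1)) ^ p =
      ∑ t : Fin n, ((if t ∈ J then f t + 1 else f t) + (n : ℤ) - ((t : ℕ) + 1)) ^ p) :
    letI x : Fin (k - r) → ℤ := fun t =>
      f ((I \ J).orderIsoOfFin hIJcard t) - ((((I \ J).orderIsoOfFin hIJcard t : Fin n) : ℕ) + 1)
    letI y : Fin (k - r) → ℤ := fun t =>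
      f ((J \ I).orderIsoOfFin hJIcard t) - ((((J \ I).orderIsoOfFin hJIcard t : Fin n) : ℕ) + 1)
    StrictAnti x ∧ StrictAnti y ∧
      (List.ofFn x : Multiset ℤ) ≠ (List.ofFn y : Multiset ℤ) ∧
      ∀ q : ℕ, 1 ≤ q → q ≤ s → ∑ t, x t ^ q = ∑ t, y t ^ q :=
  pte_solution_of_central_characters_eq_general n k s r f hf I J hIJ hIJcard hJIcard hpow
end

section
/- Let n and k be positive integers with k \leq n, let f : \{1, ..., n\} \to \mathbb{Z} be nonincreasing (f(1) \geq f(2) \geq ... \geq f(n)), and let I and J be two distinct k-element subsets of \{1, ..., n\}. For a subset A of \{1, ..., n\} define g_A(t) = f(t) + 1 if t \in A and g_A(t) = f(t) otherwise. Suppose that \sum_{t=1}^{n} (g_I(t) + n - t)^p = \sum_{t=1}^{n} (g_J(t) + n - t)^p for every p = 1, 2, ..., k. Then I \cap J = \emptyset. -/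
/-!
Put `h t = f t + n - t`, which is strictly decreasing, hence injective. Cancelling the indices
common to `I` and `J`, the hypothesis says that the sums of `(a + 1) ^ p - a ^ p` over the
multisets `h (I \ J)` and `h (J \ I)` agree for `p ≤ k`. As `(a + 1) ^ (p + 1) - a ^ (p + 1)` is
`(p + 1) a ^ p` plus lower powers, the power sums of these multisets agree in all degrees `< k`.
If `I ∩ J ≠ ∅`, both multisets have fewer than `k` elements, so Newton's identities make them
equal, and injectivity of `h` forces `I \ J = J \ I`, i.e. `I = J`.
-/

open Finset

section

variable {R : Type*} [CommRing R]

theorem Multiset.mul_esymm_eq_sum_map_pow (s : Multiset R) (j : ℕ) :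
    (j : R) * s.esymm j = (-1) ^ (j + 1) *
      ∑ a ∈ HasAntidiagonal.antidiagonal j with a.1 < j,
        (-1) ^ a.1 * s.esymm a.1 * (s.map (· ^ a.2)).sum := by
  have hs : univ.val.map s.toList.get = s := by
    rw [Fin.univ_val_map, List.ofFn_get, coe_toList]
  have hpsum (p : ℕ) : MvPolynomial.aeval s.toList.get (MvPolynomial.psum _ R p) =
      (s.map (· ^ p)).sum := by
    rw [MvPolynomial.psum, map_sum]
    simp only [map_pow, MvPolynomial.aeval_X]
    rw [sum_eq_multiset_sum]
    conv_rhs => rw [← hs]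
    rw [Multiset.map_map]
    rfl
  simpa only [map_mul, map_natCast, map_pow, map_neg, map_one, map_sum,
    MvPolynomial.aeval_esymm_eq_multiset_esymm, hs, hpsum] using
    congrArg (MvPolynomial.aeval s.toList.get) (MvPolynomial.mul_esymm_eq_sum _ R j)

variable [IsDomain R] [CharZero R]

theorem Multiset.esymm_eq_of_sum_map_pow_eq {s t : Multiset R} {m : ℕ}
    (h : ∀ p, 1 ≤ p → p ≤ m → (s.map (· ^ p)).sum = (t.map (· ^ p)).sum) :
    ∀ j ≤ m, s.esymm j = t.esymm j := by
  intro j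
  induction j using Nat.strong_induction_on with
  | _ j ih =>
    intro hjm
    rcases j.eq_zero_or_pos with rfl | hj
    · simp [esymm]
    refine mul_left_cancel₀ (Nat.cast_ne_zero.mpr hj.ne') ?_
    rw [mul_esymm_eq_sum_map_pow, mul_esymm_eq_sum_map_pow]
    congr 1
    refine sum_congr rfl fun a ha => ?_
    rw [Finset.mem_filter, HasAntidiagonal.mem_antidiagonal] at ha
    rw [ih a.1 ha.2 (by omega), h a.2 (by omega) (by omega)]

theorem Multiset.eq_of_card_eq_of_sum_map_pow_eq {s t : Multiset R} {m : ℕ}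
    (hs : card s = m) (ht : card t = m)
    (h : ∀ p, 1 ≤ p → p ≤ m → (s.map (· ^ p)).sum = (t.map (· ^ p)).sum) : s = t := by
  have hprod : (s.map fun a => Polynomial.X - Polynomial.C a).prod =
      (t.map fun a => Polynomial.X - Polynomial.C a).prod := by
    ext c
    rcases le_or_gt c m with hc | hc
    · rw [prod_X_sub_C_coeff s (hs ▸ hc), prod_X_sub_C_coeff t (ht ▸ hc), hs, ht,
        esymm_eq_of_sum_map_pow_eq h (m - c) (Nat.sub_le _ _)]
    · rw [Polynomial.coeff_eq_zero_of_natDegree_lt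
          (by rwa [Polynomial.natDegree_multiset_prod_X_sub_C_eq_card, hs]),
        Polynomial.coeff_eq_zero_of_natDegree_lt
          (by rwa [Polynomial.natDegree_multiset_prod_X_sub_C_eq_card, ht])]
  simpa only [Polynomial.roots_multiset_prod_X_sub_C] using congrArg Polynomial.roots hprod

theorem Multiset.sum_map_pow_eq_of_sum_map_add_one_pow_sub_pow_eq {s t : Multiset R} {k : ℕ}
    (h : ∀ p, 1 ≤ p → p ≤ k →
      (s.map fun a => (a + 1) ^ p - a ^ p).sum = (t.map fun a => (a + 1) ^ p - a ^ p).sum) :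
    ∀ p < k, (s.map (· ^ p)).sum = (t.map (· ^ p)).sum := by
  have expand (u : Multiset R) (p : ℕ) : (u.map fun a => (a + 1) ^ (p + 1) - a ^ (p + 1)).sum =
      ∑ i ∈ Finset.range (p + 1), (u.map (· ^ i)).sum * (p + 1).choose i := by
    simp only [add_pow, one_pow, mul_one, sum_range_succ _ (p + 1), Nat.choose_self,
      Nat.cast_one, add_sub_cancel_right, sum_map_sum, sum_map_mul_right]
  intro p
  induction p using Nat.strong_induction_on with
  | _ p ih =>
    intro hpk
    have hp := h (p + 1) (by omega) (by omega)
    have hlow : ∑ i ∈ Finset.range p, (s.map (· ^ i)).sum * (p + 1).choose i =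
        ∑ i ∈ Finset.range p, (t.map (· ^ i)).sum * (p + 1).choose i :=
      sum_congr rfl fun i hi => by
        have hip := Finset.mem_range.mp hi
        rw [ih i hip (by omega)]
    rw [expand, expand, sum_range_succ, sum_range_succ, hlow] at hp
    have hchoose : (((p + 1).choose p : ℕ) : R) ≠ 0 := by
      rw [Nat.choose_succ_self_right]
      exact_mod_cast p.succ_ne_zero
    exact mul_right_cancel₀ hchoose (add_left_cancel hp)

end

theorem Finset.sum_sdiff_sub_eq_sum_sdiff_sub_of_sum_ite_eq {ι M : Type*} [Fintype ι]
    [DecidableEq ι] [AddCommGroup M] {s t : Finset ι} {f g : ι → M}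
    (h : ∑ i, (if i ∈ s then g i else f i) = ∑ i, (if i ∈ t then g i else f i)) :
    ∑ i ∈ s \ t, (g i - f i) = ∑ i ∈ t \ s, (g i - f i) := by
  have hsplit (u : Finset ι) :
      ∑ i, (if i ∈ u then g i else f i) = ∑ i, f i + ∑ i ∈ u, (g i - f i) := by
    rw [← Fintype.sum_ite_mem u (fun i => g i - f i), ← sum_add_distrib]
    exact sum_congr rfl fun i _ => by split_ifs <;> abel
  rw [hsplit, hsplit, add_left_cancel_iff] at h
  exact sum_sdiff_eq_sum_sdiff_iff.mpr h

theorem Finset.eq_of_sdiff_eq_sdiff {α : Type*} [DecidableEq α] {s t : Finset α}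
    (h : s \ t = t \ s) : s = t := by
  ext a
  have := congrArg (a ∈ ·) h
  simp only [mem_sdiff, eq_iff_iff] at this
  tauto

theorem inter_eq_empty_of_central_characters_eq_general
    (n k : ℕ)
    (f : Fin n → ℤ) (hf : ∀ i j : Fin n, i ≤ j → f j ≤ f i)
    (I J : Finset (Fin n)) (hI : I.card = k) (hJ : J.card = k) (hIJ : I ≠ J)
    (hpow : ∀ p : ℕ, 1 ≤ p → p ≤ k →
      ∑ t : Fin n, ((if t ∈ I then f t + 1 else f t) + (n : ℤ) - ((t : ℕ) + 1)) ^ p =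
      ∑ t : Fin n, ((if t ∈ J then f t + 1 else f t) + (n : ℤ) - ((t : ℕ) + 1)) ^ p) :
    I ∩ J = ∅ := by
  set h : Fin n → ℤ := fun t => f t + n - ((t : ℕ) + 1)
  have hinj : h.Injective := StrictAnti.injective fun i j hij => by
    have hij' : (i : ℤ) < j := by exact_mod_cast hij
    linarith [hf i j hij.le]
  set A := (I \ J).val.map h
  set B := (J \ I).val.map h
  have hdiff : ∀ p, 1 ≤ p → p ≤ k →
      (A.map fun a => (a + 1) ^ p - a ^ p).sum = (B.map fun a => (a + 1) ^ p - a ^ p).sum := by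
    intro p hp hpk
    simpa only [A, B, Multiset.map_map, Function.comp_def, sum_map_val] using
      sum_sdiff_sub_eq_sum_sdiff_sub_of_sum_ite_eq (f := fun t => h t ^ p)
        (g := fun t => (h t + 1) ^ p) (by convert hpow p hp hpk using 3 <;> split_ifs <;> ring)
  by_contra hne
  have hm : (I \ J).card < k := by
    have := card_pos.mpr (nonempty_iff_ne_empty.mpr hne)
    have := card_sdiff_add_card_inter I J
    omega
  have hAB : A = B := Multiset.eq_of_card_eq_of_sum_map_pow_eq (m := (I \ J).card)
    (by rw [Multiset.card_map, card_val])
    (by rw [Multiset.card_map, card_val, card_sdiff_comm (hJ.trans hI.symm)])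
    fun p hp hpm => Multiset.sum_map_pow_eq_of_sum_map_add_one_pow_sub_pow_eq hdiff p (by omega)
  exact hIJ (eq_of_sdiff_eq_sdiff (val_injective (Multiset.map_injective hinj hAB)))

/-- Corollary 6.4 (combinatorial form).  Indices `1, …, n` are encoded by
`Fin n` (so the index `t` has value `t.1 + 1`), `f` is a nonincreasing Young
pattern, `I, J` are distinct `k`-element index sets, and `g_A(t) = f(t) + 1`
if `t ∈ A`, `g_A(t) = f(t)` otherwise.  If the power sums
`∑_t (g_I(t) + n - t)^p` and `∑_t (g_J(t) + n - t)^p` agree for `p = 1, …, k`,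
then `I ∩ J = ∅`. -/
theorem inter_eq_empty_of_central_characters_eq
    (n k : ℕ) (hn : 0 < n) (hk : 0 < k) (hkn : k ≤ n)
    (f : Fin n → ℤ) (hf : ∀ i j : Fin n, i ≤ j → f j ≤ f i)
    (I J : Finset (Fin n)) (hI : I.card = k) (hJ : J.card = k) (hIJ : I ≠ J)
    (hpow : ∀ p : ℕ, 1 ≤ p → p ≤ k →
      ∑ t : Fin n, ((if t ∈ I then f t + 1 else f t) + (n : ℤ) - ((t : ℕ) + 1)) ^ p =
      ∑ t : Fin n, ((if t ∈ J then f t + 1 else f t) + (n : ℤ) - ((t : ℕ) + 1)) ^ p) :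
    I ∩ J = ∅ :=
  inter_eq_empty_of_central_characters_eq_general n k f hf I J hI hJ hIJ hpow
end
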